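/- Let X : [a,b] → ℝ^d be a path with C¹ components and let φ : [a,b] → [a,b] be a C¹ non-decreasing surjection with φ(a) = a and φ(b) = b. Then for any indices i_1, i_2, the second-order iterated integral ∫_a^b ∫_a^{t_2} 1 dX^{i_1}_{t_1} dX^{i_2}_{t_2} equals the corresponding iterated integral of the reparameterized path t ↦ X_{φ(t)}. -/

import Mathlib

open MeasureTheory intervalIntegral

/-! Both inner integrals are increments of the path, so each side is the single integral
`∫ (x t - x a) * y'(t) dt`; for the reparameterized path this integrand is the pullback of the
original one along `φ`, and the substitution `s = φ t` together with `φ a = a`, `φ b = b`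
turns one into the other. -/

noncomputable def iteratedIntegral₂ (x y : ℝ → ℝ) (a b : ℝ) : ℝ :=
  ∫ t₂ in a..b, (∫ t₁ in a..t₂, deriv x t₁) * deriv y t₂

lemma iteratedIntegral₂_eq_integral {x : ℝ → ℝ} (hx : ContDiff ℝ 1 x) (y : ℝ → ℝ)
    (a b : ℝ) :
    iteratedIntegral₂ x y a b = ∫ t in a..b, (x t - x a) * deriv y t := by
  simp only [iteratedIntegral₂, integral_deriv_of_contDiffOn_uIcc hx.contDiffOn]

theorem iteratedIntegral₂_comp {x y φ : ℝ → ℝ} (hx : ContDiff ℝ 1 x) (hy : ContDiff ℝ 1 y)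
    (hφ : ContDiff ℝ 1 φ) (a b : ℝ) :
    iteratedIntegral₂ (x ∘ φ) (y ∘ φ) a b = iteratedIntegral₂ x y (φ a) (φ b) := by
  rw [iteratedIntegral₂_eq_integral (hx.comp hφ), iteratedIntegral₂_eq_integral hx,
    ← integral_comp_mul_deriv (g := fun s => (x s - x (φ a)) * deriv y s)
      (fun t _ => (hφ.differentiable one_ne_zero t).hasDerivAt)
      (hφ.continuous_deriv le_rfl).continuousOn
      ((hx.continuous.sub continuous_const).mul (hy.continuous_deriv le_rfl))]
  refine integral_congr fun t _ => ?_
  rw [deriv_comp t (hy.differentiable one_ne_zero (φ t)) (hφ.differentiable one_ne_zero t)]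
  simp only [Function.comp_apply]
  ring

theorem iterated_integral_reparam_invariant_general (d : ℕ) (a b : ℝ)
    (X : ℝ → Fin d → ℝ) (hX : ∀ i, ContDiff ℝ 1 (fun t => X t i))
    (φ : ℝ → ℝ) (hφ : ContDiff ℝ 1 φ)
    (hφa : φ a = a) (hφb : φ b = b) (i1 i2 : Fin d) :
    (∫ t2 in a..b, (∫ t1 in a..t2, deriv (fun t => X t i1) t1) *
        deriv (fun t => X t i2) t2) =
    ∫ t2 in a..b, (∫ t1 in a..t2, deriv (fun t => X (φ t) i1) t1) *
        deriv (fun t => X (φ t) i2) t2 := by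
  have h := iteratedIntegral₂_comp (hX i1) (hX i2) hφ a b
  rw [hφa, hφb] at h
  exact h.symm

/-- Invariance of second-order iterated integrals under a C¹,
non-decreasing reparameterization φ of [a,b] onto itself fixing the endpoints. -/
theorem iterated_integral_reparam_invariant (d : ℕ) (a b : ℝ) (hab : a ≤ b)
    (X : ℝ → Fin d → ℝ) (hX : ∀ i, ContDiff ℝ 1 (fun t => X t i))
    (φ : ℝ → ℝ) (hφ : ContDiff ℝ 1 φ) (hφmono : MonotoneOn φ (Set.Icc a b))
    (hφmaps : Set.SurjOn φ (Set.Icc a b) (Set.Icc a b))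
    (hφa : φ a = a) (hφb : φ b = b) (i1 i2 : Fin d) :
    (∫ t2 in a..b, (∫ t1 in a..t2, deriv (fun t => X t i1) t1) *
        deriv (fun t => X t i2) t2) =
    ∫ t2 in a..b, (∫ t1 in a..t2, deriv (fun t => X (φ t) i1) t1) *
        deriv (fun t => X (φ t) i2) t2 :=
  iterated_integral_reparam_invariant_general d a b X hX φ hφ hφa hφb i1 i2
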